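/- Let m_ε = (ε/r_ε) 1_{B_ε} L³⌊Ω be the rescaled measure supported on a family B_ε of disjoint layers Ω'×(ω_ε^j + r_ε I) of thickness r_ε whose centers are ε-separated in (0,L). If n_ε ⇀* n weakly* in L^∞(Ω) (with n_ε the layer-counting function), then m_ε ⇀* n L³⌊Ω weakly* in M(Ω̄). -/

import Mathlib

open MeasureTheory Set Filter Topology Bornology Classical

noncomputable section

/-- Projection of a point of `ℝ³` onto its first two coordinates. -/
def proj2 (x : Fin 3 → ℝ) : Fin 2 → ℝ := fun i => x i.castSucc

/-- Euclidean dot product on `ℝ³`. -/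
def dot3 (u v : Fin 3 → ℝ) : ℝ := ∑ i, u i * v i

/-- Squared Euclidean norm on `ℝ³`. -/
def nsq3 (u : Fin 3 → ℝ) : ℝ := ∑ i, (u i) ^ 2

/-- Entries of the symmetrized gradient `e(u) = (∇u + ∇uᵀ)/2` of a vector field on `ℝ³`. -/
def symGrad (u : (Fin 3 → ℝ) → Fin 3 → ℝ) (x : Fin 3 → ℝ) (i j : Fin 3) : ℝ :=
  (fderiv ℝ u x (Pi.single j 1) i + fderiv ℝ u x (Pi.single i 1) j) / 2

/-- Squared Frobenius norm of the symmetrized gradient. -/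
def symGradSq (u : (Fin 3 → ℝ) → Fin 3 → ℝ) (x : Fin 3 → ℝ) : ℝ :=
  ∑ i, ∑ j, (symGrad u x i j) ^ 2

/-- The cylinder `Ω = Ω' × (0,L) ⊂ ℝ³`. -/
def OmegaSet (Ω' : Set (Fin 2 → ℝ)) (L : ℝ) : Set (Fin 3 → ℝ) :=
  {x | proj2 x ∈ Ω' ∧ x 2 ∈ Set.Ioo 0 L}

/-- The union of layers `B_ε = ⋃_j Ω' × (ω_ε^j + r_ε I)`, `I = (-1/2,1/2)`. -/
def layerSet (Ω' : Set (Fin 2 → ℝ)) (ω : Finset ℝ) (r : ℝ) : Set (Fin 3 → ℝ) :=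
  {x | proj2 x ∈ Ω' ∧ ∃ c ∈ ω, |x 2 - c| < r / 2}

/-- The rescaled layer measure `m_ε = (ε/r_ε) 1_{B_ε} ℒ³⌊Ω`. -/
def layerMeasure (Ω' : Set (Fin 2 → ℝ)) (ω : Finset ℝ) (ε r : ℝ) :
    Measure (Fin 3 → ℝ) :=
  (ENNReal.ofReal (ε / r)) • volume.restrict (layerSet Ω' ω r)

/-- Geometric hypotheses on the layers: `ω_ε ⊂ (0,L)`, minimal interpoint distance `ε`,
distance `> ε/2` to `{0,L}`, and `r_ε (1+δ) < ε`. -/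
def GoodLayers (L ε r δ : ℝ) (ω : Finset ℝ) : Prop :=
  0 < L ∧ 0 < ε ∧ 0 < r ∧ 0 < δ ∧ r * (1 + δ) < ε ∧
  (∀ a ∈ ω, a ∈ Set.Ioo 0 L) ∧
  (∀ a ∈ ω, ∀ b ∈ ω, a ≠ b → ε ≤ |a - b|) ∧
  (∀ a ∈ ω, ε / 2 < a ∧ a < L - ε / 2)

/-- The rescaled layer-counting function `n_ε`. -/
def countFn (L ε : ℝ) (ω : Finset ℝ) (x3 : ℝ) : ℝ :=
  ∑' i : ℤ,
    if Set.Ioc (ε * i - ε / 2) (ε * i + ε / 2) ⊆ Set.Ioo 0 L then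
      ((ω.filter (fun a => ε * i - ε / 2 < a ∧ a ≤ ε * i + ε / 2)).card : ℝ)
        * Set.indicator (Set.Ioo (ε * i - ε / 2) (ε * i + ε / 2)) (fun _ => (1 : ℝ)) x3
    else 0

/-- Weak-* convergence in `L^∞(Ω)` of the counting functions `n_ε` to `n`. -/
def NConv (Ω' : Set (Fin 2 → ℝ)) (L : ℝ) (ε : ℕ → ℝ) (ω : ℕ → Finset ℝ)
    (n : (Fin 3 → ℝ) → ℝ) : Prop :=
  ∀ g : (Fin 3 → ℝ) → ℝ, Integrable g (volume.restrict (OmegaSet Ω' L)) →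
    Tendsto (fun k => ∫ x in OmegaSet Ω' L, countFn L (ε k) (ω k) (x 2) * g x)
      atTop (𝓝 (∫ x in OmegaSet Ω' L, n x * g x))

/-- The local vertical coordinate `y_ε` inside the (dilated) layers. -/
def yFn (r δ : ℝ) (ω : Finset ℝ) (z : ℝ) : ℝ :=
  ∑ c ∈ ω, (z - c) *
    Set.indicator (Set.Ioo (c - r * (1 + δ) / 2) (c + r * (1 + δ) / 2))
      (fun _ => (1 : ℝ)) z

/-!
Slicing `Ω = Ω' × (0, L)` horizontally, both integrals become one-dimensional integrals of the
continuous slice function `F t = ∫_{Ω'} φ(y, t) dy`. The layer of thickness `r` centred at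
`c ∈ ω_ε` contributes `(ε / r) ∫_{c ± r/2} F ≈ ε F(c)`; the counting function contributes
`∫ F ≈ ε F(c)` over the cell of length `ε` containing `c`, provided that cell lies in `(0, L)`,
which can fail only for the (at most two) layers within `ε` of `L`. Since `F` is uniformly
continuous on `[0, L]` and there are at most `L / ε + 1` layers, `∫ φ dm_ε - ∫_Ω n_ε φ → 0`,
and the weak-* convergence of `n_ε` identifies the limit.
-/

section Slicing

variable {n : ℕ}

def slab (Ω' : Set (Fin n → ℝ)) (J : Set ℝ) : Set (Fin (n + 1) → ℝ) :=
  {x | Fin.init x ∈ Ω' ∧ x (Fin.last n) ∈ J}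

lemma slab_eq_preimage (Ω' : Set (Fin n → ℝ)) (J : Set ℝ) :
    slab Ω' J = MeasurableEquiv.piFinSuccAbove (fun _ => ℝ) (Fin.last n) ⁻¹' (J ×ˢ Ω') := by
  ext x
  simp [slab, and_comm]

lemma Continuous.comp_snoc {X : Type*} [TopologicalSpace X] {f : (Fin (n + 1) → ℝ) → X}
    (hf : Continuous f) : Continuous fun p : ℝ × (Fin n → ℝ) => f (Fin.snoc p.2 p.1) :=
  hf.comp (continuous_snd.finSnoc (A := fun _ => ℝ) continuous_fst)

variable {E : Type*} [NormedAddCommGroup E]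

lemma Continuous.integrableOn_comp_snoc {f : (Fin (n + 1) → ℝ) → E} (hf : Continuous f)
    {J : Set ℝ} {Ω' : Set (Fin n → ℝ)} (hJ : IsBounded J) (hΩ' : IsBounded Ω') :
    IntegrableOn (fun p : ℝ × (Fin n → ℝ) => f (Fin.snoc p.2 p.1)) (J ×ˢ Ω') :=
  (hf.comp_snoc.continuousOn.integrableOn_compact
    (hJ.isCompact_closure.prod hΩ'.isCompact_closure)).mono_set
    (prod_mono subset_closure subset_closure)

lemma Continuous.integrableOn_slab {f : (Fin (n + 1) → ℝ) → E} (hf : Continuous f)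
    {J : Set ℝ} {Ω' : Set (Fin n → ℝ)} (hJ : IsBounded J) (hΩ' : IsBounded Ω') :
    IntegrableOn f (slab Ω' J) := by
  set e := MeasurableEquiv.piFinSuccAbove (fun _ : Fin (n + 1) => ℝ) (Fin.last n)
  have he : MeasurePreserving e := volume_preserving_piFinSuccAbove _ _
  rw [slab_eq_preimage]
  simpa [Function.comp_def, e] using
    (he.integrableOn_comp_preimage e.measurableEmbedding).2 (hf.integrableOn_comp_snoc hJ hΩ')

variable [NormedSpace ℝ E]

def sliceIntegral (f : (Fin (n + 1) → ℝ) → E) (Ω' : Set (Fin n → ℝ)) (t : ℝ) : E :=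
  ∫ y in Ω', f (Fin.snoc y t)

lemma setIntegral_slab {f : (Fin (n + 1) → ℝ) → E} {Ω' : Set (Fin n → ℝ)} {J : Set ℝ}
    (hf : IntegrableOn (fun p : ℝ × (Fin n → ℝ) => f (Fin.snoc p.2 p.1)) (J ×ˢ Ω')) :
    ∫ x in slab Ω' J, f x = ∫ t in J, sliceIntegral f Ω' t := by
  set e := MeasurableEquiv.piFinSuccAbove (fun _ : Fin (n + 1) => ℝ) (Fin.last n)
  have he : MeasurePreserving e := volume_preserving_piFinSuccAbove _ _
  set g : ℝ × (Fin n → ℝ) → E := fun p => f (Fin.snoc p.2 p.1)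
  have hge : ∀ x, g (e x) = f x := fun x => by simp [g, e]
  have hg : Integrable g ((volume.restrict J).prod (volume.restrict Ω')) := by
    rwa [Measure.prod_restrict, ← Measure.volume_eq_prod]
  rw [slab_eq_preimage]
  calc ∫ x in e ⁻¹' (J ×ˢ Ω'), f x = ∫ x in e ⁻¹' (J ×ˢ Ω'), g (e x) := by simp only [hge]
    _ = ∫ p in J ×ˢ Ω', g p := he.setIntegral_preimage_emb e.measurableEmbedding g _
    _ = ∫ t in J, sliceIntegral f Ω' t := by
      rw [Measure.volume_eq_prod, ← Measure.prod_restrict]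
      exact integral_prod g hg

lemma continuous_sliceIntegral {f : (Fin (n + 1) → ℝ) → E} (hf : Continuous f)
    {Ω' : Set (Fin n → ℝ)} (hΩ' : IsBounded Ω') : Continuous (sliceIntegral f Ω') := by
  refine continuous_iff_continuousAt.2 fun t₀ => ?_
  obtain ⟨C, hC⟩ := ((isCompact_closedBall t₀ 1).prod
    hΩ'.isCompact_closure).exists_bound_of_continuousOn hf.comp_snoc.continuousOn
  refine continuousAt_of_dominated (bound := fun _ => C) ?_ ?_
    (integrableOn_const hΩ'.measure_lt_top.ne) (ae_of_all _ fun y => ?_)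
  · exact Eventually.of_forall fun t =>
      (hf.comp_snoc.comp (Continuous.prodMk_right t)).aestronglyMeasurable
  · filter_upwards [Metric.closedBall_mem_nhds t₀ one_pos] with t ht
    exact ae_restrict_of_ae_restrict_of_subset subset_closure
      (ae_restrict_of_forall_mem isClosed_closure.measurableSet fun y hy => hC (t, y) ⟨ht, hy⟩)
  · exact (hf.comp_snoc.comp (Continuous.prodMk_left y)).continuousAt

end Slicing

def cellIndex (ε c : ℝ) : ℤ := ⌈c / ε - 1 / 2⌉

lemma cellIndex_eq_iff {ε : ℝ} (hε : 0 < ε) {c : ℝ} {i : ℤ} :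
    cellIndex ε c = i ↔ c ∈ Ioc (ε * i - ε / 2) (ε * i + ε / 2) := by
  obtain ⟨u, rfl⟩ : ∃ u, c = ε * u := ⟨c / ε, by field_simp⟩
  rw [cellIndex, Int.ceil_eq_iff, mem_Ioc, mul_div_cancel_left₀ _ hε.ne']
  constructor <;> rintro ⟨h₁, h₂⟩ <;> constructor <;> nlinarith

lemma countFn_eq_sum {L ε : ℝ} (hε : 0 < ε) (ω : Finset ℝ) (z : ℝ) :
    countFn L ε ω z = ∑ c ∈ ω with
        Ioc (ε * cellIndex ε c - ε / 2) (ε * cellIndex ε c + ε / 2) ⊆ Ioo 0 L,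
      (Ioo (ε * cellIndex ε c - ε / 2) (ε * cellIndex ε c + ε / 2)).indicator 1 z := by
  set g : ℤ → ℝ := fun i => if Ioc (ε * i - ε / 2) (ε * i + ε / 2) ⊆ Ioo 0 L then
    (Ioo (ε * i - ε / 2) (ε * i + ε / 2)).indicator 1 z else 0
  have hsplit : ∀ i : ℤ, (if Ioc (ε * i - ε / 2) (ε * i + ε / 2) ⊆ Ioo 0 L then
      ((ω.filter fun a => ε * i - ε / 2 < a ∧ a ≤ ε * i + ε / 2).card : ℝ)
        * (Ioo (ε * i - ε / 2) (ε * i + ε / 2)).indicator (fun _ => 1) z else 0)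
      = ∑ c ∈ ω, if cellIndex ε c = i then g i else 0 := fun i => by
    rw [← Finset.sum_filter, Finset.sum_const, nsmul_eq_mul]
    simp only [cellIndex_eq_iff hε, mem_Ioc, g]
    split_ifs <;> simp [Pi.one_def]
  rw [countFn, tsum_congr hsplit,
    (hasSum_sum fun c _ => hasSum_single (cellIndex ε c) fun i hi => if_neg hi.symm).tsum_eq,
    Finset.sum_filter]
  simp [g]

section Layers

variable {L ε r δ : ℝ} {ω : Finset ℝ}

lemma GoodLayers.r_lt_ε (hg : GoodLayers L ε r δ ω) : r < ε := by
  obtain ⟨-, -, hr, hδ, hrδ, -⟩ := hg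
  nlinarith

lemma GoodLayers.Ioo_subset (hg : GoodLayers L ε r δ ω) {c : ℝ} (hc : c ∈ ω) :
    Ioo (c - r / 2) (c + r / 2) ⊆ Ioo 0 L := by
  have := hg.r_lt_ε
  obtain ⟨-, -, -, -, -, -, -, hbd⟩ := hg
  exact Ioo_subset_Ioo (by linarith [hbd c hc]) (by linarith [hbd c hc])

lemma GoodLayers.pairwiseDisjoint (hg : GoodLayers L ε r δ ω) :
    (ω : Set ℝ).PairwiseDisjoint fun c => Ioo (c - r / 2) (c + r / 2) := by
  intro a ha b hb hab
  have := hg.r_lt_ε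
  obtain ⟨-, -, -, -, -, -, hsep, -⟩ := hg
  have := hsep a ha b hb hab
  refine Set.disjoint_left.2 fun t ht ht' => ?_
  have : |a - b| < r := abs_sub_lt_iff.2 ⟨by linarith [ht.1, ht'.2], by linarith [ht.2, ht'.1]⟩
  linarith

lemma GoodLayers.mem_Icc_of_not_subset (hg : GoodLayers L ε r δ ω) {c : ℝ} (hc : c ∈ ω)
    (hbad : ¬ Ioc (ε * cellIndex ε c - ε / 2) (ε * cellIndex ε c + ε / 2) ⊆ Ioo 0 L) :
    c ∈ Icc (L - ε) L := by
  obtain ⟨-, hε, -, -, -, -, -, hbd⟩ := hg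
  obtain ⟨hc₁, hc₂⟩ := (cellIndex_eq_iff hε).1 (rfl : cellIndex ε c = _)
  obtain ⟨hc₃, hc₄⟩ := hbd c hc
  have hpos : (1 : ℝ) ≤ cellIndex ε c := by
    have : (0 : ℤ) < cellIndex ε c := by
      by_contra! h
      have : (cellIndex ε c : ℝ) ≤ 0 := by exact_mod_cast h
      nlinarith
    exact_mod_cast this
  simp only [subset_def, mem_Ioc, mem_Ioo, not_forall] at hbad
  obtain ⟨t, ⟨ht₁, ht₂⟩, ht⟩ := hbad
  constructor <;> by_contra! h <;> apply ht <;> constructor <;> nlinarith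

lemma layerSet_eq_slab (Ω' : Set (Fin 2 → ℝ)) (ω : Finset ℝ) (r : ℝ) :
    layerSet Ω' ω r = slab Ω' (⋃ c ∈ ω, Ioo (c - r / 2) (c + r / 2)) := by
  ext x
  simp only [layerSet, slab, mem_ofPred_eq, mem_iUnion, mem_Ioo, exists_prop, abs_lt,
    show Fin.last 2 = 2 from rfl]
  refine and_congr Iff.rfl (exists_congr fun c => and_congr Iff.rfl ?_)
  constructor <;> rintro ⟨h₁, h₂⟩ <;> constructor <;> linarith

end Layers

section Integrals

variable {φ : (Fin 3 → ℝ) → ℝ} {Ω' : Set (Fin 2 → ℝ)} {L ε r δ : ℝ} {ω : Finset ℝ}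

lemma integral_layerMeasure (hφ : Continuous φ) (hΩ' : IsBounded Ω')
    (hg : GoodLayers L ε r δ ω) :
    ∫ x, φ x ∂layerMeasure Ω' ω ε r
      = ∑ c ∈ ω, ε / r * ∫ t in Ioo (c - r / 2) (c + r / 2), sliceIntegral φ Ω' t := by
  have hJ : IsBounded (⋃ c ∈ ω, Ioo (c - r / 2) (c + r / 2)) :=
    (isBounded_biUnion_finset ω).2 fun c _ => Metric.isBounded_Ioo _ _
  rw [layerMeasure, integral_smul_measure, ENNReal.toReal_ofReal (div_pos hg.2.1 hg.2.2.1).le,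
    layerSet_eq_slab, setIntegral_slab (hφ.integrableOn_comp_snoc hJ hΩ'),
    integral_biUnion_finset ω (fun c _ => measurableSet_Ioo) hg.pairwiseDisjoint
      fun c _ => (continuous_sliceIntegral hφ hΩ').integrableOn_Icc.mono_set Ioo_subset_Icc_self,
    smul_eq_mul, Finset.mul_sum]

lemma setIntegral_countFn_mul (hφ : Continuous φ) (hΩ' : IsBounded Ω') (hε : 0 < ε) :
    ∫ x in OmegaSet Ω' L, countFn L ε ω (x 2) * φ x
      = ∑ c ∈ ω with Ioc (ε * cellIndex ε c - ε / 2) (ε * cellIndex ε c + ε / 2) ⊆ Ioo 0 L,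
          ∫ t in Ioo (ε * cellIndex ε c - ε / 2) (ε * cellIndex ε c + ε / 2),
            sliceIntegral φ Ω' t := by
  have hind : ∀ (J : Set ℝ) (x : Fin 3 → ℝ),
      J.indicator 1 (x 2) * φ x = ((fun x : Fin 3 → ℝ => x 2) ⁻¹' J).indicator φ x := by
    intro J x
    by_cases h : x 2 ∈ J <;> simp [h]
  have hφΩ : IntegrableOn φ (OmegaSet Ω' L) :=
    hφ.integrableOn_slab (J := Ioo 0 L) (Metric.isBounded_Ioo _ _) hΩ'
  simp_rw [countFn_eq_sum hε, Finset.sum_mul, hind]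
  rw [integral_finsetSum _ fun c _ =>
    hφΩ.indicator (measurableSet_Ioo.preimage (measurable_pi_apply 2))]
  refine Finset.sum_congr rfl fun c hc => ?_
  have hsub := Ioo_subset_Ioc_self.trans (Finset.mem_filter.1 hc).2
  have hslab : OmegaSet Ω' L ∩ (fun x : Fin 3 → ℝ => x 2) ⁻¹'
      Ioo (ε * cellIndex ε c - ε / 2) (ε * cellIndex ε c + ε / 2)
      = slab Ω' (Ioo (ε * cellIndex ε c - ε / 2) (ε * cellIndex ε c + ε / 2)) := by
    ext x
    exact ⟨fun ⟨⟨h₁, _⟩, h₂⟩ => ⟨h₁, h₂⟩, fun ⟨h₁, h₂⟩ => ⟨⟨h₁, hsub h₂⟩, h₂⟩⟩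
  rw [setIntegral_indicator (measurableSet_Ioo.preimage (measurable_pi_apply 2)), hslab,
    setIntegral_slab (hφ.integrableOn_comp_snoc (Metric.isBounded_Ioo _ _) hΩ')]

end Integrals

section Estimates

lemma card_le_of_separated {s : Finset ℝ} {a b ε : ℝ} (hε : 0 < ε) (hab : a ≤ b)
    (hs : ∀ x ∈ s, x ∈ Icc a b) (hsep : ∀ x ∈ s, ∀ y ∈ s, x ≠ y → ε ≤ |x - y|) :
    (s.card : ℝ) ≤ (b - a) / ε + 1 := by
  set f : ℝ → ℕ := fun x => ⌊(x - a) / ε⌋₊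
  have hmaps : ∀ x ∈ s, f x ∈ Finset.range (⌊(b - a) / ε⌋₊ + 1) := fun x hx =>
    Finset.mem_range_succ_iff.2 (Nat.floor_le_floor (by gcongr; exact (hs x hx).2))
  have hinj : Set.InjOn f s := by
    intro x hx y hy hxy
    by_contra hne
    have hx₀ : 0 ≤ (x - a) / ε := div_nonneg (by linarith [(hs x hx).1]) hε.le
    have hy₀ : 0 ≤ (y - a) / ε := div_nonneg (by linarith [(hs y hy).1]) hε.le
    have h₁ := Nat.floor_le hx₀
    have h₂ := Nat.lt_floor_add_one ((x - a) / ε)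
    have h₃ := Nat.floor_le hy₀
    have h₄ := Nat.lt_floor_add_one ((y - a) / ε)
    simp only [f] at hxy
    rw [hxy] at h₁ h₂
    have hlt : |(x - a) / ε - (y - a) / ε| < 1 := abs_sub_lt_iff.2 ⟨by linarith, by linarith⟩
    have : |x - y| < ε := by
      rw [show x - y = ε * ((x - a) / ε - (y - a) / ε) by field_simp; ring, abs_mul,
        abs_of_pos hε]
      exact mul_lt_of_lt_one_right hε hlt
    exact (hsep x hx y hy hne).not_gt this
  calc (s.card : ℝ) ≤ (Finset.range (⌊(b - a) / ε⌋₊ + 1)).card := by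
        exact_mod_cast Finset.card_le_card_of_injOn f hmaps hinj
    _ ≤ (b - a) / ε + 1 := by
        rw [Finset.card_range, Nat.cast_add_one]
        gcongr
        exact Nat.floor_le (div_nonneg (by linarith) hε.le)

variable {F : ℝ → ℝ}

lemma abs_setIntegral_Ioo_sub_le {a ℓ c η : ℝ} (hℓ : 0 ≤ ℓ)
    (hF : IntegrableOn F (Ioo (a - ℓ / 2) (a + ℓ / 2)))
    (h : ∀ t ∈ Ioo (a - ℓ / 2) (a + ℓ / 2), |F t - F c| ≤ η) :
    |(∫ t in Ioo (a - ℓ / 2) (a + ℓ / 2), F t) - ℓ * F c| ≤ η * ℓ := by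
  have hvol : volume.real (Ioo (a - ℓ / 2) (a + ℓ / 2)) = ℓ := by
    rw [Real.volume_real_Ioo_of_le (by linarith)]
    ring
  have hsub : (∫ t in Ioo (a - ℓ / 2) (a + ℓ / 2), F t) - ℓ * F c
      = ∫ t in Ioo (a - ℓ / 2) (a + ℓ / 2), (F t - F c) := by
    rw [integral_sub hF (integrableOn_const measure_Ioo_lt_top.ne), setIntegral_const, hvol,
      smul_eq_mul]
  have := norm_setIntegral_le_of_norm_le_const (f := fun t => F t - F c) (μ := volume)
    measure_Ioo_lt_top h
  rwa [hvol, Real.norm_eq_abs, ← hsub] at this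

lemma abs_div_mul_setIntegral_sub_setIntegral_le (hF : Continuous F) {c r a ε η : ℝ}
    (hr : 0 < r) (hε : 0 < ε)
    (h₁ : ∀ t ∈ Ioo (c - r / 2) (c + r / 2), |F t - F c| ≤ η)
    (h₂ : ∀ t ∈ Ioo (a - ε / 2) (a + ε / 2), |F t - F c| ≤ η) :
    |ε / r * (∫ t in Ioo (c - r / 2) (c + r / 2), F t)
        - ∫ t in Ioo (a - ε / 2) (a + ε / 2), F t| ≤ 2 * ε * η := by
  have e₁ := abs_setIntegral_Ioo_sub_le hr.le
    (hF.integrableOn_Icc.mono_set Ioo_subset_Icc_self) h₁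
  have e₂ := abs_setIntegral_Ioo_sub_le hε.le
    (hF.integrableOn_Icc.mono_set Ioo_subset_Icc_self) h₂
  set I₁ := ∫ t in Ioo (c - r / 2) (c + r / 2), F t
  set I₂ := ∫ t in Ioo (a - ε / 2) (a + ε / 2), F t
  calc |ε / r * I₁ - I₂| = |ε / r * (I₁ - r * F c) - (I₂ - ε * F c)| := by
        congr 1
        field_simp
        ring
    _ ≤ ε / r * (η * r) + η * ε := by
        refine (abs_sub _ _).trans (add_le_add ?_ e₂)
        rw [abs_mul, abs_of_pos (div_pos hε hr)]
        gcongr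
    _ = 2 * ε * η := by
        field_simp
        ring

lemma abs_div_mul_setIntegral_le {c r ε M : ℝ} (hr : 0 < r) (hε : 0 ≤ ε)
    (hM : ∀ t ∈ Ioo (c - r / 2) (c + r / 2), |F t| ≤ M) :
    |ε / r * ∫ t in Ioo (c - r / 2) (c + r / 2), F t| ≤ ε * M := by
  have hI := norm_setIntegral_le_of_norm_le_const (f := F) (μ := volume) measure_Ioo_lt_top hM
  rw [Real.volume_real_Ioo_of_le (by linarith)] at hI
  rw [abs_mul, abs_of_nonneg (div_nonneg hε hr.le)]
  calc ε / r * |∫ t in Ioo (c - r / 2) (c + r / 2), F t|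
      ≤ ε / r * (M * (c + r / 2 - (c - r / 2))) := by gcongr; exact hI
    _ = ε * M := by
        field_simp
        ring

end Estimates

section Convergence

variable {F : ℝ → ℝ}

lemma abs_sum_layer_sub_sum_cell_le (hF : Continuous F) {L ε r δ : ℝ} {ω : Finset ℝ}
    (hg : GoodLayers L ε r δ ω) {M η : ℝ} (hM : ∀ t ∈ Icc 0 L, |F t| ≤ M)
    (hmod : ∀ s ∈ Icc 0 L, ∀ t ∈ Icc 0 L, |s - t| < ε → |F s - F t| ≤ η) :
    |(∑ c ∈ ω, ε / r * ∫ t in Ioo (c - r / 2) (c + r / 2), F t)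
        - ∑ c ∈ ω with Ioc (ε * cellIndex ε c - ε / 2) (ε * cellIndex ε c + ε / 2) ⊆ Ioo 0 L,
            ∫ t in Ioo (ε * cellIndex ε c - ε / 2) (ε * cellIndex ε c + ε / 2), F t|
      ≤ 2 * η * (L + ε) + 2 * ε * M := by
  have hrε := hg.r_lt_ε
  obtain ⟨hL, hε, hr, -, -, hω, hsep, -⟩ := id hg
  have hη : 0 ≤ η := by simpa using hmod 0 ⟨le_rfl, hL.le⟩ 0 ⟨le_rfl, hL.le⟩ (by simpa using hε)
  have hM₀ : 0 ≤ M := (abs_nonneg _).trans (hM 0 ⟨le_rfl, hL.le⟩)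
  set good := fun c => Ioc (ε * cellIndex ε c - ε / 2) (ε * cellIndex ε c + ε / 2) ⊆ Ioo 0 L
  set A := fun c => ε / r * ∫ t in Ioo (c - r / 2) (c + r / 2), F t
  set B := fun c => ∫ t in Ioo (ε * cellIndex ε c - ε / 2) (ε * cellIndex ε c + ε / 2), F t
  have hlayer : ∀ c ∈ ω, ∀ t ∈ Ioo (c - r / 2) (c + r / 2), t ∈ Icc 0 L ∧ |t - c| < ε :=
    fun c hc t ht => ⟨Ioo_subset_Icc_self (hg.Ioo_subset hc ht),
      abs_sub_lt_iff.2 ⟨by linarith [ht.2], by linarith [ht.1]⟩⟩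
  have hA_sub_B : ∀ c ∈ ω.filter good, |A c - B c| ≤ 2 * ε * η := by
    intro c hc
    obtain ⟨hcω, hcgood⟩ := Finset.mem_filter.1 hc
    have hcL : c ∈ Icc 0 L := Ioo_subset_Icc_self (hω c hcω)
    obtain ⟨hc₁, hc₂⟩ := (cellIndex_eq_iff hε).1 (rfl : cellIndex ε c = _)
    refine abs_div_mul_setIntegral_sub_setIntegral_le hF hr hε
      (fun t ht => hmod t (hlayer c hcω t ht).1 c hcL (hlayer c hcω t ht).2) fun t ht => ?_
    exact hmod t (Ioo_subset_Icc_self (hcgood (Ioo_subset_Ioc_self ht))) c hcL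
      (abs_sub_lt_iff.2 ⟨by linarith [ht.2], by linarith [ht.1]⟩)
  have hA : ∀ c ∈ ω.filter (¬good ·), |A c| ≤ ε * M := fun c hc =>
    abs_div_mul_setIntegral_le hr hε.le fun t ht =>
      hM t (hlayer c (Finset.mem_filter.1 hc).1 t ht).1
  have hcard : (ω.card : ℝ) ≤ L / ε + 1 := by
    simpa using card_le_of_separated hε hL.le (fun c hc => Ioo_subset_Icc_self (hω c hc)) hsep
  have hcard_bad : ((ω.filter fun c => ¬good c).card : ℝ) ≤ 2 := by
    have := card_le_of_separated (s := ω.filter fun c => ¬good c) hε (by linarith)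
      (fun c hc => hg.mem_Icc_of_not_subset (Finset.mem_filter.1 hc).1 (Finset.mem_filter.1 hc).2)
      fun x hx y hy => hsep x (Finset.mem_filter.1 hx).1 y (Finset.mem_filter.1 hy).1
    rwa [sub_sub_cancel, div_self hε.ne', one_add_one_eq_two] at this
  have hcard_good : ((ω.filter good).card : ℝ) ≤ ω.card := by
    exact_mod_cast Finset.card_filter_le _ _
  rw [← Finset.sum_filter_add_sum_filter_not ω good A]
  calc |∑ c ∈ ω with good c, A c + ∑ c ∈ ω with ¬good c, A c - ∑ c ∈ ω with good c, B c|
      = |∑ c ∈ ω with good c, (A c - B c) + ∑ c ∈ ω with ¬good c, A c| := by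
        rw [Finset.sum_sub_distrib, add_sub_right_comm]
    _ ≤ ∑ c ∈ ω with good c, |A c - B c| + ∑ c ∈ ω with ¬good c, |A c| :=
        (abs_add_le _ _).trans (add_le_add (Finset.abs_sum_le_sum_abs _ _)
          (Finset.abs_sum_le_sum_abs _ _))
    _ ≤ (ω.filter good).card * (2 * ε * η) + (ω.filter fun c => ¬good c).card * (ε * M) := by
        gcongr
        · exact (Finset.sum_le_card_nsmul _ _ _ hA_sub_B).trans_eq (nsmul_eq_mul _ _)
        · exact (Finset.sum_le_card_nsmul _ _ _ hA).trans_eq (nsmul_eq_mul _ _)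
    _ ≤ (L / ε + 1) * (2 * ε * η) + 2 * (ε * M) := by gcongr; exact hcard_good.trans hcard
    _ = 2 * η * (L + ε) + 2 * ε * M := by
        field_simp

lemma tendsto_sum_layer_sub_sum_cell (hF : Continuous F) {L δ : ℝ} {ε r : ℕ → ℝ}
    {ω : ℕ → Finset ℝ} (hg : ∀ k, GoodLayers L (ε k) (r k) δ (ω k))
    (hε : Tendsto ε atTop (𝓝 0)) :
    Tendsto (fun k => (∑ c ∈ ω k, ε k / r k * ∫ t in Ioo (c - r k / 2) (c + r k / 2), F t)
        - ∑ c ∈ ω k with Ioc (ε k * cellIndex (ε k) c - ε k / 2)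
            (ε k * cellIndex (ε k) c + ε k / 2) ⊆ Ioo 0 L,
          ∫ t in Ioo (ε k * cellIndex (ε k) c - ε k / 2) (ε k * cellIndex (ε k) c + ε k / 2), F t)
      atTop (𝓝 0) := by
  have hL : 0 < L := (hg 0).1
  obtain ⟨M, hM⟩ := isCompact_Icc.exists_bound_of_continuousOn (hF.continuousOn (s := Icc 0 L))
  refine Metric.tendsto_nhds.2 fun η hη => ?_
  obtain ⟨D, hD, hmod⟩ := Metric.uniformContinuousOn_iff.1
    (isCompact_Icc.uniformContinuousOn_of_continuous (hF.continuousOn (s := Icc 0 L)))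
    (η / (4 * (L + 1))) (by positivity)
  filter_upwards [hε.eventually (gt_mem_nhds hD), hε.eventually (gt_mem_nhds one_pos),
    (hε.mul_const M).eventually (gt_mem_nhds (show 0 * M < η / 4 by linarith))]
    with k hkD hk₁ hkM
  have hk₀ := (hg k).2.1
  rw [dist_zero_right, Real.norm_eq_abs]
  refine (abs_sum_layer_sub_sum_cell_le hF (hg k) (fun t ht => (Real.norm_eq_abs _).symm ▸ hM t ht)
    fun s hs t ht hst => (hmod s hs t ht (hst.trans hkD)).le).trans_lt ?_
  have : η / (4 * (L + 1)) * (L + ε k) ≤ η / 4 := by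
    rw [div_mul_eq_mul_div, div_le_div_iff₀ (by positivity) (by norm_num)]
    nlinarith
  linarith

end Convergence

theorem stmt8_general (Ω' : Set (Fin 2 → ℝ)) (hΩ'bdd : IsBounded Ω')
    (L : ℝ) (ε r : ℕ → ℝ) (δ : ℝ) (ω : ℕ → Finset ℝ)
    (hgood : ∀ k, GoodLayers L (ε k) (r k) δ (ω k))
    (hε0 : Tendsto ε atTop (𝓝 0))
    (n : (Fin 3 → ℝ) → ℝ)
    (hn : NConv Ω' L ε ω n) :
    ∀ φ : (Fin 3 → ℝ) → ℝ, Continuous φ →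
      Tendsto (fun k => ∫ x, φ x ∂(layerMeasure Ω' (ω k) (ε k) (r k)))
        atTop (𝓝 (∫ x in OmegaSet Ω' L, φ x * n x)) := by
  intro φ hφ
  have hcount := hn φ (hφ.integrableOn_slab (J := Ioo 0 L) (Metric.isBounded_Ioo 0 L) hΩ'bdd)
  have hdiff := tendsto_sum_layer_sub_sum_cell (continuous_sliceIntegral hφ hΩ'bdd) hgood hε0
  convert hdiff.add hcount using 2 with k
  · rw [integral_layerMeasure hφ hΩ'bdd (hgood k),
      setIntegral_countFn_mul hφ hΩ'bdd (hgood k).2.1, sub_add_cancel]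
  · simp_rw [zero_add, mul_comm]

/-- if the counting functions `n_ε` converge weakly* in `L^∞(Ω)` to `n`,
then the rescaled layer measures `m_ε = (ε/r_ε) 1_{B_ε} ℒ³⌊Ω` converge weakly* in
`ℳ(Ω̄)` to `n ℒ³⌊Ω`: for every continuous `φ`, `∫ φ dm_ε → ∫_Ω φ n dx`. -/
theorem stmt8 (Ω' : Set (Fin 2 → ℝ)) (hΩ'open : IsOpen Ω') (hΩ'bdd : IsBounded Ω')
    (L : ℝ) (ε r : ℕ → ℝ) (δ : ℝ) (ω : ℕ → Finset ℝ)
    (hgood : ∀ k, GoodLayers L (ε k) (r k) δ (ω k))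
    (hε0 : Tendsto ε atTop (𝓝 0))
    (n : (Fin 3 → ℝ) → ℝ)
    (hn : NConv Ω' L ε ω n) :
    ∀ φ : (Fin 3 → ℝ) → ℝ, Continuous φ →
      Tendsto (fun k => ∫ x, φ x ∂(layerMeasure Ω' (ω k) (ε k) (r k)))
        atTop (𝓝 (∫ x in OmegaSet Ω' L, φ x * n x)) :=
  stmt8_general Ω' hΩ'bdd L ε r δ ω hgood hε0 n hn
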